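/- Let Γ be a finite k-regular graph, neither complete nor null, with clique number equal to chromatic number and primitive automorphism group. Then Γ contains no two distinct vertices x, y with |N(x) ∪ N(y)| ≤ k+1. -/

import Mathlib

/-!
Suppose `x ≠ y` and `|N(x) ∪ N(y)| ≤ k + 1`. Then `N(x) \ {a} ⊆ N(y)` for some neighbour `a`
of `x`. As `χ = ω`, there are `ω`-colourings, and primitivity yields one, `C`, with
`C x ≠ C y`: otherwise the relation "equal colour in every `ω`-colouring" would be universal.
An `ω`-clique through `x` meets every colour class, so it contains a vertex `w` with
`C w = C y`; `w` is a neighbour of `x` not adjacent to `y`, hence `w = a`. So every maximum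
clique through `x` passes through `a`, and as the group is transitive, `x` and `a` lie in
equally many maximum cliques, hence in the same ones. Primitivity then makes "lying in the same
maximum cliques" trivial or universal: the first contradicts `x ≠ a`, the second makes `Γ`
complete.
-/

def IsPrimitivePermGroup {X : Type*} (G : Subgroup (Equiv.Perm X)) : Prop :=
  (∀ x y : X, ∃ g ∈ G, g x = y) ∧
  ∀ R : X → X → Prop, Equivalence R →
    (∀ g ∈ G, ∀ x y : X, R x y → R (g x) (g y)) →
    (∀ x y : X, R x y ↔ x = y) ∨ (∀ x y : X, R x y)

open Finset

theorem Finset.exists_erase_subset_of_card_union_le {α : Type*} [DecidableEq α]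
    {s t : Finset α} (hs : s.Nonempty) (h : #(s ∪ t) ≤ #t + 1) : ∃ a ∈ s, s.erase a ⊆ t := by
  by_cases hst : s ⊆ t
  · obtain ⟨a, ha⟩ := hs
    exact ⟨a, ha, (erase_subset a s).trans hst⟩
  obtain ⟨a, has, hat⟩ := not_subset.mp hst
  refine ⟨a, has, fun w hw ↦ ?_⟩
  by_contra hwt
  have hsdiff : #(s \ t) ≤ 1 := by have := card_sdiff_add_card s t; omega
  exact (mem_erase.mp hw).1
    (card_le_one.mp hsdiff w (mem_sdiff.mpr ⟨mem_of_mem_erase hw, hwt⟩) a (mem_sdiff.mpr ⟨has, hat⟩))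

theorem IsPrimitivePermGroup.injective_or_forall_eq {X β : Type*} {G : Subgroup (Equiv.Perm X)}
    (hG : IsPrimitivePermGroup G) {φ : X → β}
    (hφ : ∀ g ∈ G, ∀ u v, φ u = φ v → φ (g u) = φ (g v)) :
    Function.Injective φ ∨ ∀ u v, φ u = φ v :=
  (hG.2 (fun u v ↦ φ u = φ v) ⟨fun _ ↦ rfl, Eq.symm, Eq.trans⟩ hφ).imp
    (fun h _ _ huv ↦ (h _ _).1 huv) id

namespace SimpleGraph

variable {X : Type*} {Γ : SimpleGraph X}

def Iso.ofPerm (g : Equiv.Perm X) (hg : ∀ x y, Γ.Adj x y ↔ Γ.Adj (g x) (g y)) : Γ ≃g Γ :=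
  ⟨g, (hg _ _).symm⟩

@[simp]
theorem Iso.ofPerm_apply (g : Equiv.Perm X) (hg : ∀ x y, Γ.Adj x y ↔ Γ.Adj (g x) (g y)) (x : X) :
    Iso.ofPerm g hg x = g x :=
  rfl

theorem Iso.isNClique_map_iff {Y : Type*} {Γ' : SimpleGraph Y} (e : Γ ≃g Γ') {n : ℕ}
    {K : Finset X} : Γ'.IsNClique n (K.map e.toEquiv.toEmbedding) ↔ Γ.IsNClique n K := by
  simp [isNClique_iff, isClique_iff, Set.Pairwise, Iso.map_adj_iff]

theorem exists_coloring_apply_ne {α : Type*} {G : Subgroup (Equiv.Perm X)}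
    (hAut : ∀ g ∈ G, ∀ x y : X, Γ.Adj x y ↔ Γ.Adj (g x) (g y)) (hPrim : IsPrimitivePermGroup G)
    (hEdge : ∃ x y : X, Γ.Adj x y) (hcol : Nonempty (Γ.Coloring α)) {x y : X} (hxy : x ≠ y) :
    ∃ C : Γ.Coloring α, C x ≠ C y := by
  let φ : X → Γ.Coloring α → α := fun u C ↦ C u
  have hφ : ∀ g ∈ G, ∀ u v, φ u = φ v → φ (g u) = φ (g v) := fun g hg _ _ h ↦
    funext fun C ↦ congrFun h (C.comp (Iso.ofPerm g (hAut g hg)).toHom)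
  rcases hPrim.injective_or_forall_eq hφ with hinj | hconst
  · by_contra! h
    exact hxy (hinj (funext h))
  · obtain ⟨u, v, huv⟩ := hEdge
    obtain ⟨C⟩ := hcol
    exact (C.valid huv (congrFun (hconst u v) C)).elim

theorem IsNClique.exists_mem_coloring_eq {n : ℕ} {K : Finset X} (hK : Γ.IsNClique n K)
    (C : Γ.Coloring (Fin n)) (c : Fin n) : ∃ w ∈ K, C w = c := by
  classical
  have hinj : Set.InjOn C K := fun p hp q hq hpq ↦ by
    by_contra hne
    exact C.valid (hK.isClique hp hq hne) hpq
  have himage : K.image C = univ :=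
    eq_univ_of_card _ (by rw [card_image_of_injOn hinj, hK.card_eq, Fintype.card_fin])
  exact mem_image.mp (himage.symm ▸ mem_univ c)


theorem IsNClique.mem_of_erase_subset [Fintype X] [DecidableEq X] [DecidableRel Γ.Adj]
    {n : ℕ} {C : Γ.Coloring (Fin n)} {x y a : X} (hC : C x ≠ C y)
    (hN : (Γ.neighborFinset x).erase a ⊆ Γ.neighborFinset y) {K : Finset X}
    (hK : Γ.IsNClique n K) (hx : x ∈ K) : a ∈ K := by
  obtain ⟨w, hwK, hw⟩ := hK.exists_mem_coloring_eq C (C y)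
  have hxw : Γ.Adj x w := hK.isClique hx hwK (by rintro rfl; exact hC hw)
  by_contra haK
  have hwa : w ≠ a := ne_of_mem_of_not_mem hwK haK
  have hyw : Γ.Adj y w := by simpa using hN (mem_erase.mpr ⟨hwa, by simpa using hxw⟩)
  exact C.valid hyw hw.symm

section CliquesThrough

variable [Fintype X] [DecidableEq X] (Γ) [DecidableRel Γ.Adj]

def cliquesThrough (n : ℕ) (u : X) : Finset (Finset X) := {K ∈ Γ.cliqueFinset n | u ∈ K}

variable {Γ}

@[simp]
theorem mem_cliquesThrough {n : ℕ} {u : X} {K : Finset X} :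
    K ∈ Γ.cliquesThrough n u ↔ Γ.IsNClique n K ∧ u ∈ K := by
  simp [cliquesThrough]

theorem cliquesThrough_iso_apply (e : Γ ≃g Γ) (n : ℕ) (u : X) :
    Γ.cliquesThrough n (e u) =
      (Γ.cliquesThrough n u).map (mapEmbedding e.toEquiv.toEmbedding).toEmbedding := by
  ext K
  simp only [mem_cliquesThrough, mem_map, RelEmbedding.coe_toEmbedding, mapEmbedding_apply]
  constructor
  · rintro ⟨hK, hu⟩
    refine ⟨K.map e.symm.toEquiv.toEmbedding, ⟨e.symm.isNClique_map_iff.2 hK, ?_⟩, ?_⟩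
    · exact mem_map_equiv.2 hu
    · rw [Finset.map_map]
      convert map_refl
      ext a
      simp
  · rintro ⟨L, ⟨hL, hu⟩, rfl⟩
    exact ⟨e.isNClique_map_iff.2 hL, mem_map_of_mem _ hu⟩

theorem cliquesThrough_injective {G : Subgroup (Equiv.Perm X)}
    (hAut : ∀ g ∈ G, ∀ x y : X, Γ.Adj x y ↔ Γ.Adj (g x) (g y)) (hPrim : IsPrimitivePermGroup G)
    (hNonComplete : ∃ x y : X, x ≠ y ∧ ¬ Γ.Adj x y) :
    Function.Injective (Γ.cliquesThrough Γ.cliqueNum) := by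
  refine (hPrim.injective_or_forall_eq fun g hg u v h ↦ ?_).resolve_right fun hconst ↦ ?_
  · have hmap := cliquesThrough_iso_apply (.ofPerm g (hAut g hg)) Γ.cliqueNum
    simp only [Iso.ofPerm_apply] at hmap
    rw [hmap, hmap, h]
  · obtain ⟨x, y, hxy, hnadj⟩ := hNonComplete
    obtain ⟨K, hK⟩ := Γ.exists_isNClique_cliqueNum
    have hpos : 0 < #K := hK.card_eq ▸ IsClique.card_le_cliqueNum (t := {x}) (tc := by simp)
    obtain ⟨w, hw⟩ := card_pos.mp hpos
    have hmem (u : X) : u ∈ K :=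
      (mem_cliquesThrough.1 (hconst w u ▸ mem_cliquesThrough.2 ⟨hK, hw⟩)).2
    exact hnadj (hK.isClique (hmem x) (hmem y) hxy)

theorem cliquesThrough_eq_of_subset {G : Subgroup (Equiv.Perm X)}
    (hAut : ∀ g ∈ G, ∀ x y : X, Γ.Adj x y ↔ Γ.Adj (g x) (g y))
    (htrans : ∀ x y : X, ∃ g ∈ G, g x = y) {n : ℕ} {x y : X}
    (h : Γ.cliquesThrough n x ⊆ Γ.cliquesThrough n y) :
    Γ.cliquesThrough n x = Γ.cliquesThrough n y := by
  obtain ⟨g, hg, rfl⟩ := htrans x y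
  refine eq_of_subset_of_card_le h ?_
  have hmap := cliquesThrough_iso_apply (.ofPerm g (hAut g hg)) n x
  simp only [Iso.ofPerm_apply] at hmap
  rw [hmap, card_map]

end CliquesThrough

end SimpleGraph

theorem stmt7 {X : Type*} [Fintype X] [DecidableEq X] (Γ : SimpleGraph X)
    [DecidableRel Γ.Adj] (k : ℕ)
    (G : Subgroup (Equiv.Perm X))
    (hAut : ∀ g ∈ G, ∀ x y : X, Γ.Adj x y ↔ Γ.Adj (g x) (g y))
    (hPrim : IsPrimitivePermGroup G)
    (hreg : Γ.IsRegularOfDegree k)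
    (hchrom : Γ.chromaticNumber = (Γ.cliqueNum : ℕ∞))
    (hEdge : ∃ x y : X, Γ.Adj x y)
    (hNonComplete : ∃ x y : X, x ≠ y ∧ ¬ Γ.Adj x y) :
    ∀ x y : X, x ≠ y →
      ¬ ((Γ.neighborFinset x ∪ Γ.neighborFinset y).card ≤ k + 1) := by
  intro x y hxy hcard
  have hdeg (u : X) : #(Γ.neighborFinset u) = k := (Γ.card_neighborFinset_eq_degree u).trans (hreg u)
  have hNx : (Γ.neighborFinset x).Nonempty := by
    obtain ⟨u, v, huv⟩ := hEdge
    rw [← card_pos, hdeg x, ← hdeg u]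
    exact card_pos.mpr ⟨v, (Γ.mem_neighborFinset u v).2 huv⟩
  obtain ⟨a, hxa, hN⟩ := exists_erase_subset_of_card_union_le hNx (hdeg y ▸ hcard)
  obtain ⟨C, hC⟩ := Γ.exists_coloring_apply_ne hAut hPrim hEdge
    (SimpleGraph.chromaticNumber_le_iff_colorable.mp hchrom.le) hxy
  have hsub : Γ.cliquesThrough Γ.cliqueNum x ⊆ Γ.cliquesThrough Γ.cliqueNum a := fun K hK ↦ by
    rw [SimpleGraph.mem_cliquesThrough] at hK ⊢
    exact ⟨hK.1, hK.1.mem_of_erase_subset hC hN hK.2⟩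
  have hxa_eq : x = a := Γ.cliquesThrough_injective hAut hPrim hNonComplete
    (Γ.cliquesThrough_eq_of_subset hAut hPrim.1 hsub)
  exact ((Γ.mem_neighborFinset x a).1 hxa).ne hxa_eq
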